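/- Let z > 0 and let π : ℝ → ℝ be measurable and nonnegative. Then the GP posterior normalizing constant for a single observation satisfies the exact identity C_1(π; z) = z^{−1} ∫_ℝ π(ξ) dξ; equivalently, ∫_{ξ<0} π(ξ) ∫_{−ξ z}^∞ σ^{−2}(1 + ξ z/σ)^{−(1+1/ξ)} dσ dξ + ∫_{ξ>0} π(ξ) ∫_0^∞ σ^{−2}(1 + ξ z/σ)^{−(1+1/ξ)} dσ dξ = z^{−1} ∫_ℝ π(ξ) dξ (as an identity in [0,∞]). -/

import Mathlib

open MeasureTheory Real Set
open scoped ENNReal Classical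

/-- The inner integral over the scale `σ` of the Generalized Pareto posterior
integrand, for a fixed shape `ξ`, data `z` and prior `π(σ,ξ) ∝ π(ξ)/σ`:
`∫_{max(0, -ξ z_m)}^∞ σ^{-(m+1)} ∏_{i=1}^m (1 + ξ z_i/σ)^{-(1+1/ξ)} dσ`,
with the Gumbel interpretation `σ^{-(m+1)} exp(-(Σ_i z_i)/σ)` when `ξ = 0`. -/
noncomputable def gpInner (m : ℕ) (z : Fin m → ℝ) (ξ : ℝ) : ℝ≥0∞ :=
  ∫⁻ σ in Set.Ioi (max 0 (-ξ * ⨆ i, z i)),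
    ENNReal.ofReal
      (if ξ = 0 then σ ^ (-((m : ℝ) + 1)) * Real.exp (-(∑ i, z i) / σ)
       else σ ^ (-((m : ℝ) + 1)) * ∏ i, (1 + ξ * z i / σ) ^ (-(1 + 1 / ξ)))

/-- The Generalized Pareto posterior normalizing constant
`C_m(π; z) = ∫_ℝ π(ξ) ∫_{max(0,-ξ z_m)}^∞ σ^{-(m+1)} ∏_i (1+ξ z_i/σ)^{-(1+1/ξ)} dσ dξ`. -/
noncomputable def gpC (m : ℕ) (z : Fin m → ℝ) (p : ℝ → ℝ) : ℝ≥0∞ :=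
  ∫⁻ ξ : ℝ, ENNReal.ofReal (p ξ) * gpInner m z ξ

/-! For every shape `ξ` the scale integral equals `z⁻¹`: as a function of the scale `σ`, the
survival function `z⁻¹ (1 + ξ z / σ) ^ (-1/ξ)` (`z⁻¹ exp (-z / σ)` for `ξ = 0`) is an
antiderivative of the integrand which tends to `0` at the lower end `max 0 (-ξ z)` of the range
of `σ` and to `z⁻¹` as `σ → ∞`. The inner integral is therefore the constant `z⁻¹`; in the split
form only the null set `{ξ = 0}` is missing. -/

open Filter Topology

theorem MeasureTheory.lintegral_Iio_add_lintegral_Ioi {α : Type*} [MeasurableSpace α]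
    [LinearOrder α] [TopologicalSpace α] [OrderClosedTopology α] [OpensMeasurableSpace α]
    {μ : Measure α} [NullSingletonClass μ] (f : α → ℝ≥0∞) (a : α) :
    ∫⁻ x in Iio a, f x ∂μ + ∫⁻ x in Ioi a, f x ∂μ = ∫⁻ x, f x ∂μ := by
  rw [setLIntegral_congr Ioi_ae_eq_Ici, ← compl_Iio, lintegral_add_compl f measurableSet_Iio]

theorem lintegral_Ioi_ofReal_of_hasDerivAt_of_tendsto {g g' : ℝ → ℝ} {a l : ℝ}
    (hderiv : ∀ x ∈ Ioi a, HasDerivAt g (g' x) x) (hg' : ∀ x ∈ Ioi a, 0 ≤ g' x)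
    (hbot : Tendsto g (𝓝[>] a) (𝓝 0)) (htop : Tendsto g atTop (𝓝 l)) :
    ∫⁻ x in Ioi a, ENNReal.ofReal (g' x) = ENNReal.ofReal l := by
  set G := Function.update g a 0
  have hG0 : G a = 0 := Function.update_self ..
  have hG : ∀ x ∈ Ioi a, G =ᶠ[𝓝 x] g := fun x hx =>
    (eventually_ne_nhds (ne_of_gt hx)).mono fun y hy => Function.update_of_ne hy _ _
  have hderivG : ∀ x ∈ Ioi a, HasDerivAt G (g' x) x := fun x hx =>
    (hderiv x hx).congr_of_eventuallyEq (hG x hx)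
  have hcontG : ContinuousWithinAt G (Ici a) a := by
    rwa [continuousWithinAt_update_same, Ici_sdiff_left]
  have htopG : Tendsto G atTop (𝓝 l) :=
    htop.congr' <| (eventually_gt_atTop a).mono fun x hx => ((hG x hx).self_of_nhds).symm
  rw [← ofReal_integral_eq_lintegral_ofReal
      (integrableOn_Ioi_deriv_of_nonneg hcontG hderivG hg' htopG)
      ((ae_restrict_iff' measurableSet_Ioi).2 (.of_forall hg')),
    integral_Ioi_of_hasDerivAt_of_nonneg hcontG hderivG hg' htopG, hG0, sub_zero]

theorem hasDerivAt_inv_mul_one_add_div_rpow {ξ z σ : ℝ} (hξ : ξ ≠ 0) (hz : z ≠ 0)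
    (hσ : σ ≠ 0) (hb : 1 + ξ * z / σ ≠ 0) :
    HasDerivAt (fun s => z⁻¹ * (1 + ξ * z / s) ^ (-ξ⁻¹))
      (σ ^ (-(2 : ℝ)) * (1 + ξ * z / σ) ^ (-(1 + 1 / ξ))) σ := by
  have hbase : HasDerivAt (fun s => 1 + ξ * z / s) (-(ξ * z) / σ ^ 2) σ := by
    simpa [div_eq_mul_inv] using ((hasDerivAt_inv hσ).const_mul (ξ * z)).const_add 1
  refine ((hbase.rpow_const (p := -ξ⁻¹) (.inl hb)).const_mul z⁻¹).congr_deriv ?_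
  rw [Real.rpow_neg_ofNat, show -(1 + 1 / ξ) = -ξ⁻¹ - 1 by ring]
  field_simp

theorem tendsto_inv_mul_one_add_div_rpow_atTop (c e z : ℝ) :
    Tendsto (fun s : ℝ => z⁻¹ * (1 + c / s) ^ e) atTop (𝓝 z⁻¹) := by
  have hbase : Tendsto (fun s : ℝ => 1 + c / s) atTop (𝓝 1) := by
    simpa [div_eq_mul_inv] using tendsto_const_nhds.add (tendsto_inv_atTop_zero.const_mul c)
  simpa using (hbase.rpow_const (.inl one_ne_zero)).const_mul z⁻¹

theorem lintegral_scale_of_shape_pos {ξ z : ℝ} (hz : 0 < z) (hξ : 0 < ξ) :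
    ∫⁻ σ in Ioi 0, ENNReal.ofReal (σ ^ (-(2 : ℝ)) * (1 + ξ * z / σ) ^ (-(1 + 1 / ξ))) =
      ENNReal.ofReal z⁻¹ := by
  have hbase : Tendsto (fun s => 1 + ξ * z / s) (𝓝[>] 0) atTop := by
    refine tendsto_atTop_add_const_left _ _ ?_
    exact (tendsto_inv_nhdsGT_zero.const_mul_atTop (mul_pos hξ hz)).congr fun s =>
      (div_eq_mul_inv _ _).symm
  have hbot : Tendsto (fun s => z⁻¹ * (1 + ξ * z / s) ^ (-ξ⁻¹)) (𝓝[>] 0) (𝓝 0) := by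
    simpa using ((tendsto_rpow_neg_atTop (inv_pos.2 hξ)).comp hbase).const_mul z⁻¹
  refine lintegral_Ioi_ofReal_of_hasDerivAt_of_tendsto (fun σ (hσ : 0 < σ) => ?_)
    (fun σ (hσ : 0 < σ) => by positivity) hbot (tendsto_inv_mul_one_add_div_rpow_atTop _ _ _)
  exact hasDerivAt_inv_mul_one_add_div_rpow hξ.ne' hz.ne' hσ.ne' (by positivity)

theorem lintegral_scale_of_shape_neg {ξ z : ℝ} (hz : 0 < z) (hξ : ξ < 0) :
    ∫⁻ σ in Ioi (-ξ * z), ENNReal.ofReal (σ ^ (-(2 : ℝ)) * (1 + ξ * z / σ) ^ (-(1 + 1 / ξ))) =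
      ENNReal.ofReal z⁻¹ := by
  have ha : 0 < -ξ * z := mul_pos (neg_pos.2 hξ) hz
  have hb : ∀ σ ∈ Ioi (-ξ * z), 0 < 1 + ξ * z / σ := fun σ (hσ : -ξ * z < σ) => by
    rw [one_add_div (ha.trans hσ).ne']
    exact div_pos (by linarith) (ha.trans hσ)
  have hcont : ContinuousAt (fun s => z⁻¹ * (1 + ξ * z / s) ^ (-ξ⁻¹)) (-ξ * z) :=
    ((continuousAt_const.add (continuousAt_const.div continuousAt_id ha.ne')).rpow_const
      (.inr (neg_nonneg.2 (inv_nonpos.2 hξ.le)))).const_mul _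
  have hzero : z⁻¹ * (1 + ξ * z / (-ξ * z)) ^ (-ξ⁻¹) = 0 := by
    rw [neg_mul, div_neg, div_self (mul_ne_zero hξ.ne hz.ne'), add_neg_cancel,
      zero_rpow (neg_ne_zero.2 (inv_ne_zero hξ.ne)), mul_zero]
  have hbot : Tendsto (fun s => z⁻¹ * (1 + ξ * z / s) ^ (-ξ⁻¹)) (𝓝[>] (-ξ * z)) (𝓝 0) := by
    rw [← hzero]
    exact hcont.tendsto.mono_left nhdsWithin_le_nhds
  refine lintegral_Ioi_ofReal_of_hasDerivAt_of_tendsto (fun σ hσ => ?_) (fun σ hσ => ?_) hbot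
    (tendsto_inv_mul_one_add_div_rpow_atTop _ _ _)
  · exact hasDerivAt_inv_mul_one_add_div_rpow hξ.ne hz.ne' (ha.trans hσ).ne' (hb σ hσ).ne'
  · exact mul_nonneg (rpow_nonneg (ha.trans hσ).le _) (rpow_nonneg (hb σ hσ).le _)

theorem lintegral_scale_of_shape_zero {z : ℝ} (hz : 0 < z) :
    ∫⁻ σ in Ioi 0, ENNReal.ofReal (σ ^ (-(2 : ℝ)) * exp (-z / σ)) = ENNReal.ofReal z⁻¹ := by
  have hbot : Tendsto (fun s => z⁻¹ * exp (-z / s)) (𝓝[>] 0) (𝓝 0) := by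
    have hlin : Tendsto (fun s => -z / s) (𝓝[>] 0) atBot := by
      simpa [div_eq_mul_inv] using
        (tendsto_const_mul_atBot_of_neg (neg_neg_of_pos hz)).2 tendsto_inv_nhdsGT_zero
    simpa using (tendsto_exp_atBot.comp hlin).const_mul z⁻¹
  have htop : Tendsto (fun s => z⁻¹ * exp (-z / s)) atTop (𝓝 z⁻¹) := by
    have hlin : Tendsto (fun s => -z / s) atTop (𝓝 0) := tendsto_const_nhds.div_atTop tendsto_id
    simpa using ((continuous_exp.tendsto 0).comp hlin).const_mul z⁻¹
  refine lintegral_Ioi_ofReal_of_hasDerivAt_of_tendsto (fun σ (hσ : 0 < σ) => ?_)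
    (fun σ (hσ : 0 < σ) => by positivity) hbot htop
  have hlin : HasDerivAt (fun s => -z / s) (z / σ ^ 2) σ := by
    simpa [div_eq_mul_inv] using (hasDerivAt_inv hσ.ne').const_mul (-z)
  refine (hlin.exp.const_mul z⁻¹).congr_deriv ?_
  rw [rpow_neg_ofNat]
  field_simp

theorem gpInner_one_const {z : ℝ} (hz : 0 < z) (ξ : ℝ) :
    gpInner 1 (fun _ => z) ξ = ENNReal.ofReal z⁻¹ := by
  simp only [gpInner, ciSup_const, Fin.prod_univ_one, Fin.sum_univ_one, Nat.cast_one,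
    show -((1 : ℝ) + 1) = -2 by norm_num]
  rcases lt_trichotomy ξ 0 with hξ | rfl | hξ
  · rw [max_eq_right (mul_pos (neg_pos.2 hξ) hz).le, ← lintegral_scale_of_shape_neg hz hξ]
    simp only [hξ.ne, if_false]
  · simpa using lintegral_scale_of_shape_zero hz
  · rw [max_eq_left (mul_nonpos_of_nonpos_of_nonneg (neg_nonpos.2 hξ.le) hz.le),
      ← lintegral_scale_of_shape_pos hz hξ]
    simp only [hξ.ne', if_false]

theorem gp_C1_eq (z : ℝ) (hz : 0 < z) (p : ℝ → ℝ) :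
    gpC 1 (fun _ => z) p = ENNReal.ofReal z⁻¹ * ∫⁻ ξ : ℝ, ENNReal.ofReal (p ξ) ∧
    (∫⁻ ξ in Set.Iio (0 : ℝ), ENNReal.ofReal (p ξ) *
        ∫⁻ σ in Set.Ioi (-ξ * z),
          ENNReal.ofReal (σ ^ (-(2 : ℝ)) * (1 + ξ * z / σ) ^ (-(1 + 1 / ξ)))) +
      (∫⁻ ξ in Set.Ioi (0 : ℝ), ENNReal.ofReal (p ξ) *
        ∫⁻ σ in Set.Ioi (0 : ℝ),
          ENNReal.ofReal (σ ^ (-(2 : ℝ)) * (1 + ξ * z / σ) ^ (-(1 + 1 / ξ)))) =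
      ENNReal.ofReal z⁻¹ * ∫⁻ ξ : ℝ, ENNReal.ofReal (p ξ) := by
  have hconst : ∫⁻ ξ, ENNReal.ofReal (p ξ) * ENNReal.ofReal z⁻¹ =
      ENNReal.ofReal z⁻¹ * ∫⁻ ξ, ENNReal.ofReal (p ξ) := by
    rw [lintegral_mul_const' _ _ ENNReal.ofReal_ne_top, mul_comm]
  refine ⟨by simp only [gpC, gpInner_one_const hz, hconst], ?_⟩
  rw [setLIntegral_congr_fun measurableSet_Iio fun ξ hξ => by
      rw [lintegral_scale_of_shape_neg hz hξ],
    setLIntegral_congr_fun measurableSet_Ioi fun ξ hξ => by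
      rw [lintegral_scale_of_shape_pos hz hξ],
    lintegral_Iio_add_lintegral_Ioi, hconst]
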